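/- arXiv:math/0410509 — 4 statements merged into one kernel-verified Lean document; each statement's English description precedes it below -/
import Mathlib

section
/- Let A > 0 be real, B ∈ ℂ with |B| < A, and V ∈ ℝ. Then the 2-dimensional Lebesgue measure of the set { z ∈ ℂ : A|z|² + Re(B z²) < V } equals π·max(V,0)/√(A² − |B|²). -/
/-!
Write `B = ‖B‖ u²` with `‖u‖ = 1`. In the rotated variable `w = u z` the quadratic form becomes
`(A + ‖B‖) (Re w)² + (A - ‖B‖) (Im w)²`, i.e. `‖T z‖²` for a real-linear map `T` of determinant
`√(A² - ‖B‖²)`. The sublevel set is therefore the preimage under `T` of the disc of radius `√V`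
(empty when `V ≤ 0`), whose area is `π max(V, 0)`.
-/

open MeasureTheory

namespace Complex

theorem exists_norm_eq_one_and_eq_norm_mul_sq (B : ℂ) : ∃ u : ℂ, ‖u‖ = 1 ∧ B = ‖B‖ * u ^ 2 := by
  refine ⟨exp ((B.arg / 2 : ℝ) * I), norm_exp_ofReal_mul_I _, ?_⟩
  have hu : exp ((B.arg / 2 : ℝ) * I) ^ 2 = exp (B.arg * I) := by
    rw [← exp_nat_mul]; push_cast; ring_nf
  rw [hu, norm_mul_exp_arg_mul_I]

theorem mul_norm_sq_add_re_mul_sq (A b : ℝ) (w : ℂ) :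
    A * ‖w‖ ^ 2 + (b * w ^ 2).re = (A + b) * w.re ^ 2 + (A - b) * w.im ^ 2 := by
  rw [Complex.sq_norm, normSq_apply, re_ofReal_mul, sq, mul_re]
  ring

noncomputable def scaleReIm (p q : ℝ) : ℂ →ₗ[ℝ] ℂ where
  toFun z := ↑(p * z.re) + ↑(q * z.im) * I
  map_add' z w := by push_cast [add_re, add_im]; ring
  map_smul' r z := by push_cast [real_smul, re_ofReal_mul, im_ofReal_mul, RingHom.id_apply]; ring

@[simp]
theorem scaleReIm_re (p q : ℝ) (z : ℂ) : (scaleReIm p q z).re = p * z.re := by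
  simp [scaleReIm]

@[simp]
theorem scaleReIm_im (p q : ℝ) (z : ℂ) : (scaleReIm p q z).im = q * z.im := by
  simp [scaleReIm]

theorem det_scaleReIm (p q : ℝ) : LinearMap.det (scaleReIm p q) = p * q := by
  rw [← LinearMap.det_toMatrix basisOneI, Matrix.det_fin_two]
  simp [LinearMap.toMatrix_apply]

theorem norm_scaleReIm_sq (p q : ℝ) (z : ℂ) :
    ‖scaleReIm p q z‖ ^ 2 = p ^ 2 * z.re ^ 2 + q ^ 2 * z.im ^ 2 := by
  rw [Complex.sq_norm, normSq_apply, scaleReIm_re, scaleReIm_im]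
  ring

theorem det_mulLeft (u : ℂ) : LinearMap.det (LinearMap.mulLeft ℝ u) = normSq u := by
  rw [← Algebra.norm_complex_apply, Algebra.norm_apply]
  rfl

theorem volume_setOf_norm_sq_lt (T : ℂ →ₗ[ℝ] ℂ) (hT : LinearMap.det T ≠ 0) (V : ℝ) :
    volume {z | ‖T z‖ ^ 2 < V} = ENNReal.ofReal (Real.pi * max V 0 / |LinearMap.det T|) := by
  have hball : {z | ‖T z‖ ^ 2 < V} = T ⁻¹' Metric.ball 0 √V := by
    ext z
    simp [Real.lt_sqrt]
  rw [hball, Measure.addHaar_preimage_linearMap volume hT, volume_ball,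
    ← ENNReal.ofReal_pow (Real.sqrt_nonneg V), Real.sq_sqrt', ← ENNReal.ofReal_coe_nnreal,
    NNReal.coe_real_pi, abs_inv, ← ENNReal.ofReal_mul (by positivity),
    ← ENNReal.ofReal_mul (by positivity)]
  congr 1
  ring

end Complex

open Complex in
theorem area_quadratic_sublevel_general (A : ℝ) (B : ℂ) (hB : ‖B‖ < A)
    (V : ℝ) :
    volume {z : ℂ | A * ‖z‖ ^ 2 + (B * z ^ 2).re < V}
      = ENNReal.ofReal (Real.pi * max V 0 / Real.sqrt (A ^ 2 - ‖B‖ ^ 2)) := by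
  obtain ⟨u, hu, hBu⟩ := exists_norm_eq_one_and_eq_norm_mul_sq B
  set b := ‖B‖
  have hApb : 0 ≤ A + b := by linarith [norm_nonneg B]
  have hAmb : 0 ≤ A - b := by linarith
  set T := scaleReIm √(A + b) √(A - b) ∘ₗ LinearMap.mulLeft ℝ u
  have hdet : LinearMap.det T = √(A ^ 2 - b ^ 2) := by
    rw [LinearMap.det_comp, det_scaleReIm, det_mulLeft, normSq_eq_norm_sq, hu, ← Real.sqrt_mul hApb]
    ring_nf
  have hform : ∀ z, A * ‖z‖ ^ 2 + (B * z ^ 2).re = ‖T z‖ ^ 2 := fun z => by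
    rw [LinearMap.comp_apply, LinearMap.mulLeft_apply, norm_scaleReIm_sq, Real.sq_sqrt hApb,
      Real.sq_sqrt hAmb, ← mul_norm_sq_add_re_mul_sq, norm_mul, hu, one_mul, hBu]
    ring_nf
  have hpos : 0 < √(A ^ 2 - b ^ 2) := Real.sqrt_pos.2 (by nlinarith [norm_nonneg B])
  simp_rw [hform]
  rw [volume_setOf_norm_sq_lt T (hdet ▸ hpos.ne'), hdet, abs_of_pos hpos]

/-- The area of the sublevel set `{z ∈ ℂ : A|z|² + Re(Bz²) < V}` with `|B| < A` is
`π·max(V,0)/√(A² - |B|²)`. -/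
theorem area_quadratic_sublevel (A : ℝ) (hA : 0 < A) (B : ℂ) (hB : ‖B‖ < A)
    (V : ℝ) :
    volume {z : ℂ | A * ‖z‖ ^ 2 + (B * z ^ 2).re < V}
      = ENNReal.ofReal (Real.pi * max V 0 / Real.sqrt (A ^ 2 - ‖B‖ ^ 2)) :=
  area_quadratic_sublevel_general A B hB V
end

section
/- Let m ≥ 1, let T : ℂ^m → ℂ^m be an invertible ℂ-linear map with component linear functionals T₁, …, T_m (so Tz = (T₁z, …, T_m z)), let φ₁, …, φ_m ≥ 0 be real numbers, and let V > 0. Then the 2m-dimensional Lebesgue measure of the set { z ∈ ℂ^m : Σ_{j=1}^m ( √(1+φ_j²) |T_j z|² + φ_j Re((T_j z)²) ) < V } equals π^m V^m / ( m! · |det T|² ), where det T is the determinant of the complex matrix of T. -/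
open MeasureTheory
open scoped ENNReal

noncomputable section

abbrev Eucl (n : ℕ) := EuclideanSpace ℂ (Fin n)

instance (n : ℕ) : MeasurableSpace (Eucl n) := MeasurableSpace.comap WithLp.ofLp MeasurableSpace.pi
instance (n : ℕ) : BorelSpace (Eucl n) := PiLp.borelSpace _

/-!
Put `a = √(√(1 + φ²) + φ)`. Since `(√(1 + φ²) + φ)(√(1 + φ²) - φ) = 1`, the squeeze
`S (x + iy) = a x + i y / a` of `ℂ ≅ ℝ²` satisfies `|S w|² = √(1 + φ²)|w|² + φ Re(w²)`, and
`det S = 1`. Hence the sublevel set is the preimage of the ball of radius `√V` in `ℂᵐ ≅ ℝ²ᵐ`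
under `S ∘ T` (one squeeze per coordinate), whose real determinant is `det_ℝ T = |det T|²`;
that ball has volume `πᵐ Vᵐ / m!`.
-/

open Module Metric

lemma LinearMap.det_restrictScalars_complex {E : Type*} [AddCommGroup E] [Module ℂ E]
    (f : E →ₗ[ℂ] E) :
    LinearMap.det (f.restrictScalars ℝ) = Complex.normSq (LinearMap.det f) := by
  rw [LinearMap.det_restrictScalars, Algebra.norm_complex_apply]

lemma Real.sqrt_one_add_sq_add_pos (φ : ℝ) : 0 < √(1 + φ ^ 2) + φ := by
  nlinarith [Real.sqrt_nonneg (1 + φ ^ 2), Real.sq_sqrt (by positivity : 0 ≤ 1 + φ ^ 2)]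

namespace Complex

def squeeze (a : ℝ) : ℂ →ₗ[ℝ] ℂ where
  toFun z := ⟨a * z.re, z.im / a⟩
  map_add' z w := by apply Complex.ext <;> simp <;> ring
  map_smul' r z := by apply Complex.ext <;> simp <;> ring

@[simp] lemma squeeze_re (a : ℝ) (z : ℂ) : (squeeze a z).re = a * z.re := rfl
@[simp] lemma squeeze_im (a : ℝ) (z : ℂ) : (squeeze a z).im = z.im / a := rfl

lemma det_squeeze {a : ℝ} (ha : a ≠ 0) : LinearMap.det (squeeze a) = 1 := by
  rw [← LinearMap.det_toMatrix basisOneI, Matrix.det_fin_two]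
  simp [LinearMap.toMatrix_apply, ha]

lemma sq_norm_squeeze (a : ℝ) (w : ℂ) :
    ‖squeeze a w‖ ^ 2 = a ^ 2 * w.re ^ 2 + w.im ^ 2 / a ^ 2 := by
  rw [Complex.sq_norm, normSq_apply, squeeze_re, squeeze_im]
  ring

lemma sq_norm_squeeze_sqrt (φ : ℝ) (w : ℂ) :
    ‖squeeze √(√(1 + φ ^ 2) + φ) w‖ ^ 2 = √(1 + φ ^ 2) * ‖w‖ ^ 2 + φ * (w ^ 2).re := by
  have hc : √(1 + φ ^ 2) ^ 2 = 1 + φ ^ 2 := Real.sq_sqrt (by positivity)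
  have hpos := Real.sqrt_one_add_sq_add_pos φ
  rw [sq_norm_squeeze, Real.sq_sqrt hpos.le, Complex.sq_norm, normSq_apply, sq w, mul_re]
  field_simp
  linear_combination -(w.im ^ 2 * hc)

end Complex

namespace EuclideanSpace

variable {ι : Type*}

def squeeze (s : ι → ℝ) : EuclideanSpace ℂ ι →ₗ[ℝ] EuclideanSpace ℂ ι :=
  (WithLp.linearEquiv 2 ℝ (ι → ℂ)).symm.conj
    (LinearMap.pi fun j => (Complex.squeeze (s j)).comp (LinearMap.proj j))

@[simp] lemma squeeze_apply (s : ι → ℝ) (z : EuclideanSpace ℂ ι) (j : ι) :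
    squeeze s z j = Complex.squeeze (s j) (z j) := rfl

variable [Fintype ι]

lemma det_squeeze {s : ι → ℝ} (hs : ∀ j, s j ≠ 0) : LinearMap.det (squeeze s) = 1 := by
  rw [squeeze, LinearEquiv.conj_apply, LinearMap.comp_assoc, LinearMap.det_conj,
    LinearMap.det_pi]
  simp [Complex.det_squeeze, hs]

lemma finrank_real_complex : finrank ℝ (EuclideanSpace ℂ ι) = 2 * Fintype.card ι := by
  rw [← finrank_mul_finrank ℝ ℂ, Complex.finrank_real_complex, finrank_euclideanSpace]

end EuclideanSpace

theorem volume_normalized_sublevel_general (m : ℕ) (hm : 1 ≤ m) (T : Eucl m ≃ₗ[ℂ] Eucl m)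
    (φ : Fin m → ℝ) (V : ℝ) (hV : 0 < V) :
    volume {z : Eucl m |
        ∑ j, (Real.sqrt (1 + φ j ^ 2) * ‖T z j‖ ^ 2 + φ j * ((T z j) ^ 2).re) < V}
      = ENNReal.ofReal
          (Real.pi ^ m * V ^ m /
            (Nat.factorial m * ‖LinearMap.det (T : Eucl m →ₗ[ℂ] Eucl m)‖ ^ 2)) := by
  set G : Eucl m →ₗ[ℝ] Eucl m := EuclideanSpace.squeeze (fun j => √(√(1 + φ j ^ 2) + φ j)) ∘ₗ
    (T : Eucl m →ₗ[ℂ] Eucl m).restrictScalars ℝ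
  have hdim : finrank ℝ (Eucl m) = 2 * m := by
    rw [EuclideanSpace.finrank_real_complex, Fintype.card_fin]
  have : Nontrivial (Eucl m) := nontrivial_of_finrank_pos (R := ℝ) (by omega)
  have hdetT : 0 < ‖LinearMap.det (T : Eucl m →ₗ[ℂ] Eucl m)‖ :=
    norm_pos_iff.2 T.isUnit_det'.ne_zero
  have hdetG : LinearMap.det G = ‖LinearMap.det (T : Eucl m →ₗ[ℂ] Eucl m)‖ ^ 2 := by
    rw [LinearMap.det_comp, EuclideanSpace.det_squeeze
      fun j => (Real.sqrt_pos.2 (Real.sqrt_one_add_sq_add_pos _)).ne', one_mul,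
      LinearMap.det_restrictScalars_complex, Complex.sq_norm]
  have hset : {z : Eucl m |
      ∑ j, (Real.sqrt (1 + φ j ^ 2) * ‖T z j‖ ^ 2 + φ j * ((T z j) ^ 2).re) < V}
      = G ⁻¹' ball 0 √V := by
    ext z
    simp [G, Real.lt_sqrt, EuclideanSpace.norm_sq_eq, Complex.sq_norm_squeeze_sqrt]
  rw [hset, Measure.addHaar_preimage_linearMap _ (by rw [hdetG]; positivity),
    InnerProductSpace.volume_ball_of_dim_even hdim, hdetG, hdim,
    ← ENNReal.ofReal_pow (Real.sqrt_nonneg _), pow_mul, Real.sq_sqrt hV.le,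
    ← ENNReal.ofReal_mul (by positivity), ← ENNReal.ofReal_mul (by positivity)]
  congr 1
  rw [abs_of_pos (by positivity)]
  field_simp

/-- The volume of the ellipsoidal sublevel set
`{z ∈ ℂᵐ : Σ_j (√(1+φ_j²)|T_j z|² + φ_j Re((T_j z)²)) < V}` for an invertible `ℂ`-linear
map `T` with component functionals `T_j` and `φ_j ≥ 0` is `πᵐ Vᵐ / (m!·|det T|²)`. -/
theorem volume_normalized_sublevel (m : ℕ) (hm : 1 ≤ m) (T : Eucl m ≃ₗ[ℂ] Eucl m)
    (φ : Fin m → ℝ) (hφ : ∀ j, 0 ≤ φ j) (V : ℝ) (hV : 0 < V) :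
    volume {z : Eucl m |
        ∑ j, (Real.sqrt (1 + φ j ^ 2) * ‖T z j‖ ^ 2 + φ j * ((T z j) ^ 2).re) < V}
      = ENNReal.ofReal
          (Real.pi ^ m * V ^ m /
            (Nat.factorial m * ‖LinearMap.det (T : Eucl m →ₗ[ℂ] Eucl m)‖ ^ 2)) :=
  volume_normalized_sublevel_general m hm T φ V hV
end
end

section
/- Let m ≥ 1, let H be an m×m positive definite hermitian complex matrix, and let S be an m×m symmetric complex matrix. Then there exist an invertible m×m complex matrix T and nonnegative real numbers φ₁, …, φ_m such that for every z ∈ ℂ^m: z* H z + Re(zᵀ S z) = Σ_{j=1}^m ( |(Tz)_j|² + φ_j Re((Tz)_j²) ). -/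
/-!
Takagi's factorization, taken with respect to the inner product `⟪x, y⟫ = x* Hᵀ y` defined by
`H`. The bilinear form `β(x, y) = xᵀ S y` is represented by the conjugate-linear map `g` with
`⟪g x, y⟫ = β(x, y)`. Then `g ∘ g` is linear, and for an eigenvector `w` the symmetry of `β`
gives `⟪g (g w), w⟫ = ‖g w‖²`, so its eigenvalue is some `σ² ≥ 0`; then `g w + σ w` (or `i w`
when this vanishes) satisfies `g v = σ v`, i.e. `β(v, ·) = σ ⟪v, ·⟫`. By symmetry
`β(u, v) = σ ⟪v, u⟫ = 0` for `u ⊥ v`, so induction on the dimension, applied to `v⊥`, gives an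
orthonormal basis `b` with `β(b_j, ·) = φ_j ⟪b_j, ·⟫`, and `T` is the matrix of the coordinates `z ↦ ⟪b_j, z⟫`.
-/

open scoped ComplexConjugate ComplexOrder InnerProductSpace
open Matrix Module InnerProductSpace

theorem LinearMap.exists_ne_zero_apply_eq_smul_of_apply_apply_eq_sq_smul {V : Type*}
    [AddCommGroup V] [Module ℂ V] (g : V →ₗ⋆[ℂ] V) {w : V} (hw : w ≠ 0) (σ : ℝ)
    (h : g (g w) = ((σ ^ 2 : ℝ) : ℂ) • w) : ∃ v ≠ 0, g v = (σ : ℂ) • v := by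
  by_cases hu : g w + (σ : ℂ) • w = 0
  · refine ⟨Complex.I • w, smul_ne_zero Complex.I_ne_zero hw, ?_⟩
    rw [LinearMap.map_smulₛₗ, eq_neg_of_add_eq_zero_left hu, Complex.conj_I, smul_comm]
    module
  · refine ⟨_, hu, ?_⟩
    rw [map_add, LinearMap.map_smulₛₗ, h, Complex.conj_ofReal]
    push_cast
    module

theorem orthonormal_finCons {𝕜 E : Type*} [RCLike 𝕜] [NormedAddCommGroup E]
    [InnerProductSpace 𝕜 E] {n : ℕ} {v : E} {b : Fin n → E} (hv : ‖v‖ = 1)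
    (hb : Orthonormal 𝕜 b) (hvb : ∀ j, ⟪v, b j⟫_𝕜 = 0) :
    Orthonormal 𝕜 (Fin.cons v b : Fin (n + 1) → E) := by
  refine ⟨Fin.cases hv hb.1, fun i j hij => ?_⟩
  cases i using Fin.cases with
  | zero =>
    cases j using Fin.cases with
    | zero => exact absurd rfl hij
    | succ j => exact hvb j
  | succ i =>
    cases j using Fin.cases with
    | zero => exact inner_eq_zero_symm.mp (hvb i)
    | succ j => exact hb.2 fun h => hij (congrArg Fin.succ h)

section

variable {E : Type*} [NormedAddCommGroup E] [InnerProductSpace ℂ E]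

theorem bilin_eq_mul_inner_of_mem_orthogonal_singleton {β : E →ₗ[ℂ] E →ₗ[ℂ] ℂ}
    (hβ : ∀ x y, β x y = β y x) {v : E} {σ : ℝ} (hv : ‖v‖ = 1)
    (hβv : ∀ y, β v y = σ * ⟪v, y⟫_ℂ) {u : E} (hu : u ∈ (ℂ ∙ v)ᗮ) {φ : ℝ}
    (hβu : ∀ y ∈ (ℂ ∙ v)ᗮ, β u y = φ * ⟪u, y⟫_ℂ) (y : E) :
    β u y = φ * ⟪u, y⟫_ℂ := by
  have hvu : ⟪v, u⟫_ℂ = 0 := Submodule.mem_orthogonal_singleton_iff_inner_right.mp hu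
  have hy : y - ⟪v, y⟫_ℂ • v ∈ (ℂ ∙ v)ᗮ := by
    rw [Submodule.mem_orthogonal_singleton_iff_inner_right, inner_sub_right, inner_smul_right,
      inner_self_eq_norm_sq_to_K, hv]
    simp
  have h := hβu _ hy
  rw [map_sub, map_smul, hβ u v, hβv, hvu, inner_sub_right, inner_smul_right,
    inner_eq_zero_symm.mp hvu] at h
  simpa using h

variable [FiniteDimensional ℂ E]

noncomputable def conjLinearOfBilin (β : E →ₗ[ℂ] E →ₗ[ℂ] ℂ) : E →ₗ⋆[ℂ] E :=
  (toDual ℂ E).symm.toLinearEquiv.toLinearMap ∘ₛₗ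
    (LinearMap.toContinuousLinearMap.toLinearMap ∘ₗ β)

theorem inner_conjLinearOfBilin_left (β : E →ₗ[ℂ] E →ₗ[ℂ] ℂ) (x y : E) :
    ⟪conjLinearOfBilin β x, y⟫_ℂ = β x y := by
  simp [conjLinearOfBilin]

theorem exists_norm_eq_one_forall_bilin_eq_mul_inner [Nontrivial E] (β : E →ₗ[ℂ] E →ₗ[ℂ] ℂ)
    (hβ : ∀ x y, β x y = β y x) :
    ∃ (v : E) (σ : ℝ), ‖v‖ = 1 ∧ 0 ≤ σ ∧ ∀ y, β v y = σ * ⟪v, y⟫_ℂ := by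
  set g := conjLinearOfBilin β
  obtain ⟨μ, hμ⟩ := Module.End.exists_eigenvalue (g ∘ₛₗ g)
  obtain ⟨w, hw⟩ := hμ.exists_hasEigenvector
  have hgw : g (g w) = μ • w := hw.apply_eq_smul
  have hw0 : w ≠ 0 := hw.2
  have hμ_eq : μ = ((‖g w‖ / ‖w‖) ^ 2 : ℝ) := by
    have key : ⟪g (g w), w⟫_ℂ = ⟪g w, g w⟫_ℂ := by
      rw [inner_conjLinearOfBilin_left, hβ, inner_conjLinearOfBilin_left]
    rw [hgw, inner_smul_left, inner_self_eq_norm_sq_to_K, inner_self_eq_norm_sq_to_K] at key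
    have hw' : (‖w‖ : ℂ) ≠ 0 := by exact_mod_cast norm_ne_zero_iff.mpr hw0
    have hconj : conj μ = ((‖g w‖ / ‖w‖) ^ 2 : ℝ) := by
      rw [Complex.ofReal_pow, Complex.ofReal_div, div_pow, eq_div_iff (pow_ne_zero 2 hw')]
      exact_mod_cast key
    simpa using congrArg conj hconj
  obtain ⟨v, hv0, hgv⟩ :=
    g.exists_ne_zero_apply_eq_smul_of_apply_apply_eq_sq_smul hw0 _ (hμ_eq ▸ hgw)
  refine ⟨(‖v‖ : ℂ)⁻¹ • v, ‖g w‖ / ‖w‖, norm_smul_inv_norm hv0, by positivity, fun y => ?_⟩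
  rw [← inner_conjLinearOfBilin_left, LinearMap.map_smulₛₗ, hgv, map_inv₀, Complex.conj_ofReal,
    smul_comm, inner_smul_left, Complex.conj_ofReal]

theorem exists_orthonormal_forall_bilin_eq_mul_inner (n : ℕ) (hn : finrank ℂ E = n)
    (β : E →ₗ[ℂ] E →ₗ[ℂ] ℂ) (hβ : ∀ x y, β x y = β y x) :
    ∃ (b : Fin n → E) (φ : Fin n → ℝ), Orthonormal ℂ b ∧ (∀ j, 0 ≤ φ j) ∧
      ∀ j y, β (b j) y = φ j * ⟪b j, y⟫_ℂ := by
  induction n generalizing E with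
  | zero =>
    exact ⟨Fin.elim0, Fin.elim0, ⟨fun i => i.elim0, fun i => i.elim0⟩, fun j => j.elim0,
      fun j => j.elim0⟩
  | succ n ih =>
    have : Nontrivial E := Module.nontrivial_of_finrank_eq_succ hn
    have : Fact (finrank ℂ E = n + 1) := ⟨hn⟩
    obtain ⟨v, σ, hv, hσ, hβv⟩ := exists_norm_eq_one_forall_bilin_eq_mul_inner β hβ
    set V := (ℂ ∙ v)ᗮ
    have hV : finrank ℂ V = n :=
      Submodule.finrank_orthogonal_span_singleton (norm_ne_zero_iff.mp (hv ▸ one_ne_zero))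
    obtain ⟨b, φ, hb, hφ, hβb⟩ := ih hV (β.compl₁₂ V.subtype V.subtype) fun x y => hβ x y
    refine ⟨Fin.cons v fun j => b j, Fin.cons σ φ, ?_, Fin.cases hσ hφ, ?_⟩
    · exact orthonormal_finCons hv (hb.comp_linearIsometry V.subtypeₗᵢ)
        fun j => Submodule.mem_orthogonal_singleton_iff_inner_right.mp (b j).2
    · intro j
      cases j using Fin.cases with
      | zero => exact hβv
      | succ j =>
        exact bilin_eq_mul_inner_of_mem_orthogonal_singleton hβ hv hβv (b j).2
          fun y hy => hβb j ⟨y, hy⟩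

theorem exists_orthonormalBasis_bilin_self_eq_sum {ι : Type*} [Fintype ι]
    (hι : Fintype.card ι = finrank ℂ E) (β : E →ₗ[ℂ] E →ₗ[ℂ] ℂ) (hβ : ∀ x y, β x y = β y x) :
    ∃ (b : OrthonormalBasis ι ℂ E) (φ : ι → ℝ), (∀ j, 0 ≤ φ j) ∧
      ∀ x, β x x = ∑ j, φ j * ⟪b j, x⟫_ℂ ^ 2 := by
  obtain ⟨b, φ, hb, hφ, hβb⟩ := exists_orthonormal_forall_bilin_eq_mul_inner _ rfl β hβ
  let e := Fintype.equivFinOfCardEq hι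
  have hbe : Orthonormal ℂ (b ∘ e) := hb.comp e e.injective
  let B := OrthonormalBasis.mk hbe (hbe.linearIndependent.span_eq_top_of_card_eq_finrank' hι).ge
  refine ⟨B, φ ∘ e, fun j => hφ (e j), fun x => ?_⟩
  calc β x x = β (∑ j, ⟪B j, x⟫_ℂ • B j) x := by rw [B.sum_repr']
    _ = ∑ j, φ (e j) * ⟪B j, x⟫_ℂ ^ 2 := by simp [B, hβb, pow_two, mul_left_comm]

end

namespace Matrix

theorem PosDef.exists_isUnit_det_forall_eq_sum {ι : Type*} [Fintype ι] [DecidableEq ι]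
    {K S : Matrix ι ι ℂ} (hK : K.PosDef) (hS : S.IsSymm) :
    ∃ T : Matrix ι ι ℂ, IsUnit T.det ∧ ∃ φ : ι → ℝ, (∀ j, 0 ≤ φ j) ∧ ∀ z : ι → ℂ,
      ((K *ᵥ z) ⬝ᵥ star z).re = ∑ j, ‖(T *ᵥ z) j‖ ^ 2 ∧
        z ⬝ᵥ (S *ᵥ z) = ∑ j, φ j * (T *ᵥ z) j ^ 2 := by
  let := K.toNormedAddCommGroup hK
  let := K.toInnerProductSpace hK.posSemidef
  obtain ⟨b, φ, hφ, hb⟩ := exists_orthonormalBasis_bilin_self_eq_sum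
    (finrank_fintype_fun_eq_card ℂ).symm (toLinearMap₂' ℂ S) fun x y => by
      rw [toLinearMap₂'_apply', toLinearMap₂'_apply', dotProduct_mulVec, ← mulVec_transpose,
        hS.eq, dotProduct_comm]
  have := b.toBasis.invertibleToMatrix (Pi.basisFun ℂ ι)
  refine ⟨b.toBasis.toMatrix (Pi.basisFun ℂ ι), isUnit_det_of_invertible _, φ, hφ, fun z => ?_⟩
  have hT : b.toBasis.toMatrix (Pi.basisFun ℂ ι) *ᵥ z = b.toBasis.repr z := by
    have h := (Pi.basisFun ℂ ι).toMatrix_mulVec_repr b.toBasis z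
    rwa [show ⇑((Pi.basisFun ℂ ι).repr z) = z from funext (Pi.basisFun_repr ℂ ι z)] at h
  simp only [hT, b.coe_toBasis_repr_apply, b.repr_apply_apply]
  rw [← toLinearMap₂'_apply', hb, b.sum_sq_norm_inner_right z]
  -- the instances must be given explicitly: elaboration would pick the sup norm on `ι → ℂ`
  exact ⟨@inner_self_eq_norm_sq ℂ _ _ (K.toSeminormedAddCommGroup hK.posSemidef)
    (K.toInnerProductSpace hK.posSemidef) z, rfl⟩

end Matrix

theorem hermitian_symmetric_normal_form_general (m : ℕ)
    (H S : Matrix (Fin m) (Fin m) ℂ) (hH : H.PosDef) (hS : S.IsSymm) :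
    ∃ T : Matrix (Fin m) (Fin m) ℂ, IsUnit T.det ∧
      ∃ φ : Fin m → ℝ, (∀ j, 0 ≤ φ j) ∧
        ∀ z : Fin m → ℂ,
          (∑ j, ∑ k, H j k * z j * star (z k)).re + (∑ j, ∑ k, S j k * z j * z k).re
            = ∑ j, (‖T.mulVec z j‖ ^ 2 + φ j * ((T.mulVec z j) ^ 2).re) := by
  obtain ⟨T, hT, φ, hφ, hTz⟩ := hH.transpose.exists_isUnit_det_forall_eq_sum hS
  refine ⟨T, hT, φ, hφ, fun z => ?_⟩
  have hHz : ∑ j, ∑ k, H j k * z j * star (z k) = (Hᵀ *ᵥ z) ⬝ᵥ star z := by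
    simp only [dotProduct, mulVec, transpose_apply, Finset.sum_mul, Pi.star_apply]
    rw [Finset.sum_comm]
  have hSz : ∑ j, ∑ k, S j k * z j * z k = z ⬝ᵥ (S *ᵥ z) := by
    simp only [dotProduct, mulVec, Finset.mul_sum]
    exact Finset.sum_congr rfl fun j _ => Finset.sum_congr rfl fun k _ => by ring
  rw [hHz, hSz, (hTz z).1, (hTz z).2, Complex.re_sum, ← Finset.sum_add_distrib]
  simp

/-- Simultaneous normal form (cf. Webster's Lemma 4.1): given a positive definite hermitian
`H` and a symmetric `S`, there are an invertible `T` and `φ_j ≥ 0` with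
`z*Hz + Re(zᵀSz) = Σ_j (|(Tz)_j|² + φ_j Re((Tz)_j²))` for all `z ∈ ℂᵐ`. -/
theorem hermitian_symmetric_normal_form (m : ℕ) (hm : 1 ≤ m)
    (H S : Matrix (Fin m) (Fin m) ℂ) (hH : H.PosDef) (hS : S.IsSymm) :
    ∃ T : Matrix (Fin m) (Fin m) ℂ, IsUnit T.det ∧
      ∃ φ : Fin m → ℝ, (∀ j, 0 ≤ φ j) ∧
        ∀ z : Fin m → ℂ,
          (∑ j, ∑ k, H j k * z j * star (z k)).re + (∑ j, ∑ k, S j k * z j * z k).re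
            = ∑ j, (‖T.mulVec z j‖ ^ 2 + φ j * ((T.mulVec z j) ^ 2).re) :=
  hermitian_symmetric_normal_form_general m H S hH hS
end

section
/- Let m ≥ 1, let T : ℂ^m → ℂ^m be an invertible ℂ-linear map with component functionals T₁, …, T_m, let φ₁, …, φ_m ≥ 0, and let f be a real-valued function defined on a neighborhood of 0 in ℂ^m with f(z) = Σ_{j=1}^m ( |T_j z|² + φ_j Re((T_j z)²) ) + o(‖z‖²) as z → 0. If f(z) ≥ 0 for all z in some neighborhood of 0, then φ_j ≤ 1 for every j. -/
open Asymptotics Filter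
open scoped Topology

noncomputable section

/-- Restricting to the real line through `v`, `f(t v) / t² = q v + o(1)`, and the left side is
eventually nonnegative. -/
theorem nonneg_of_isLittleO_sq_of_eventually_nonneg {E : Type*} [NormedAddCommGroup E]
    [NormedSpace ℝ E] {f q : E → ℝ} (hq : ∀ (t : ℝ) v, q (t • v) = t ^ 2 * q v)
    (hf : (fun z => f z - q z) =o[𝓝 0] fun z => ‖z‖ ^ 2) (hnn : ∀ᶠ z in 𝓝 (0 : E), 0 ≤ f z)
    (v : E) : 0 ≤ q v := by
  have hline : Tendsto (fun t : ℝ => t • v) (𝓝 0) (𝓝 0) :=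
    (continuous_id'.smul continuous_const).tendsto' 0 0 (zero_smul ℝ v)
  have hsq : (fun t : ℝ => f (t • v) - t ^ 2 * q v) =o[𝓝 0] fun t => t ^ 2 := by
    refine ((hf.comp_tendsto hline).trans_isBigO ?_).congr_left fun t => by simp [hq]
    refine IsBigO.of_bound (‖v‖ ^ 2) (Eventually.of_forall fun t => ?_)
    simp [norm_smul, mul_pow, mul_comm]
  have hlim : Tendsto (fun t : ℝ => f (t • v) / t ^ 2) (𝓝[≠] 0) (𝓝 (q v)) := by
    have := (hsq.tendsto_div_nhds_zero.mono_left (nhdsWithin_le_nhds (s := {0}ᶜ))).add_const (q v)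
    rw [zero_add] at this
    refine this.congr' (eventually_nhdsWithin_of_forall fun t (ht : t ≠ 0) => ?_)
    field_simp
    ring
  refine ge_of_tendsto hlim ?_
  filter_upwards [nhdsWithin_le_nhds (hline.eventually hnn)] with t ht
  positivity

def quadForm {m : ℕ} (φ : Fin m → ℝ) (w : Eucl m) : ℝ :=
  ∑ k, (‖w k‖ ^ 2 + φ k * ((w k) ^ 2).re)

theorem quadForm_smul {m : ℕ} (φ : Fin m → ℝ) (t : ℝ) (w : Eucl m) :
    quadForm φ (t • w) = t ^ 2 * quadForm φ w := by
  simp only [quadForm, Finset.mul_sum]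
  refine Finset.sum_congr rfl fun k _ => ?_
  rw [PiLp.smul_apply, Complex.real_smul, norm_mul, Complex.norm_real, Real.norm_eq_abs,
    mul_pow, sq_abs, mul_pow, ← Complex.ofReal_pow, Complex.re_ofReal_mul]
  ring

theorem quadForm_single_I {m : ℕ} (φ : Fin m → ℝ) (j : Fin m) :
    quadForm φ (EuclideanSpace.single j Complex.I) = 1 - φ j := by
  rw [quadForm, Finset.sum_eq_single j (fun k _ hk => by simp [hk]) (by simp)]
  simp only [PiLp.single_eq_same, Complex.norm_I, Complex.I_sq, Complex.neg_re, Complex.one_re]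
  ring

theorem coeff_le_one_of_nonneg_general (m : ℕ) (T : Eucl m ≃ₗ[ℂ] Eucl m)
    (φ : Fin m → ℝ) (f : Eucl m → ℝ)
    (hf : (fun z : Eucl m =>
        f z - ∑ j, (‖T z j‖ ^ 2 + φ j * ((T z j) ^ 2).re))
      =o[𝓝 0] fun z : Eucl m => ‖z‖ ^ 2)
    (hnn : ∀ᶠ z in 𝓝 (0 : Eucl m), 0 ≤ f z) :
    ∀ j, φ j ≤ 1 := by
  intro j
  have hq (t : ℝ) (z : Eucl m) : quadForm φ (T (t • z)) = t ^ 2 * quadForm φ (T z) := by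
    rw [LinearMapClass.map_smul_of_tower T, quadForm_smul]
  have := nonneg_of_isLittleO_sq_of_eventually_nonneg (q := fun z => quadForm φ (T z)) hq hf hnn
    (T.symm (EuclideanSpace.single j Complex.I))
  rw [LinearEquiv.apply_symm_apply, quadForm_single_I] at this
  linarith

/-- If `f(z) = Σ_j (|T_j z|² + φ_j Re((T_j z)²)) + o(‖z‖²)` near `0` with `T` invertible
and `φ_j ≥ 0`, and `f ≥ 0` near `0`, then every `φ_j ≤ 1`. -/
theorem coeff_le_one_of_nonneg (m : ℕ) (hm : 1 ≤ m) (T : Eucl m ≃ₗ[ℂ] Eucl m)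
    (φ : Fin m → ℝ) (hφ : ∀ j, 0 ≤ φ j) (f : Eucl m → ℝ)
    (hf : (fun z : Eucl m =>
        f z - ∑ j, (‖T z j‖ ^ 2 + φ j * ((T z j) ^ 2).re))
      =o[𝓝 0] fun z : Eucl m => ‖z‖ ^ 2)
    (hnn : ∀ᶠ z in 𝓝 (0 : Eucl m), 0 ≤ f z) :
    ∀ j, φ j ≤ 1 :=
  coeff_le_one_of_nonneg_general m T φ f hf hnn
end
end
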